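/- arXiv:math-ph/0212049 — 2 statements merged into one kernel-verified Lean document; each statement's English description precedes it below -/
import Mathlib

section
/- Let g be a self-adjoint invertible endomorphism of an n-dimensional real inner product space V with p positive and q negative eigenvalues (p + q = n). Let (b_k) be an orthonormal basis and η the endomorphism with η(b_k) = b_k for k ≤ p and η(b_k) = −b_k for k > p. Then there exists an invertible endomorphism h of V with g = hᵀ ∘ η ∘ h. -/
/-!
Diagonalise `g` in its orthonormal eigenbasis `v` and choose a permutation `σ` sending the indices
of positive eigenvalues to `{k | k < p}`. The map `h` with `h (v i) = √|μ i| • b (σ i)` then satisfies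
`(hᵀ ∘ η ∘ h) (v i) = √|μ i| * sign (μ i) * √|μ i| • v i = μ i • v i`, and it is injective because
`g = hᵀ ∘ η ∘ h` is.
-/

open scoped RealInnerProductSpace

open Finset in
theorem Equiv.Perm.exists_apply_iff_of_card_filter_eq {α : Type*} [Fintype α]
    {p q : α → Prop} [DecidablePred p] [DecidablePred q] (h : #{x | p x} = #{x | q x}) :
    ∃ σ : Equiv.Perm α, ∀ x, q (σ x) ↔ p x := by
  rw [← Fintype.card_subtype, ← Fintype.card_subtype] at h
  let e := Fintype.equivOfCardEq h
  exact ⟨e.extendSubtype, fun x =>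
    ⟨fun hq => by_contra fun hp => e.extendSubtype_not_mem x hp hq, e.extendSubtype_mem x⟩⟩

section Adjoint

variable {𝕜 E F ι : Type*} [RCLike 𝕜] [NormedAddCommGroup E] [InnerProductSpace 𝕜 E]
  [NormedAddCommGroup F] [InnerProductSpace 𝕜 F] [FiniteDimensional 𝕜 E] [FiniteDimensional 𝕜 F]
  [Fintype ι] {v : OrthonormalBasis ι 𝕜 E} {w : ι → F} {h : E →ₗ[𝕜] F} {c : ι → 𝕜}

open scoped ComplexConjugate

theorem LinearMap.adjoint_apply_of_apply_eq_smul (hw : Orthonormal 𝕜 w)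
    (hh : ∀ i, h (v i) = c i • w i) (i : ι) :
    LinearMap.adjoint h (w i) = conj (c i) • v i := by
  classical
  refine InnerProductSpace.ext_inner_left_basis v.toBasis fun j => ?_
  rw [OrthonormalBasis.coe_toBasis, LinearMap.adjoint_inner_right, hh, inner_smul_left,
    inner_smul_right, orthonormal_iff_ite.mp hw, orthonormal_iff_ite.mp v.orthonormal]
  split_ifs with hji
  · rw [hji]
  · simp

theorem LinearMap.adjoint_comp_comp_apply_of_apply_eq_smul (hw : Orthonormal 𝕜 w)
    (hh : ∀ i, h (v i) = c i • w i) {η : F →ₗ[𝕜] F} {ε : ι → 𝕜}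
    (hη : ∀ i, η (w i) = ε i • w i) (i : ι) :
    (LinearMap.adjoint h ∘ₗ η ∘ₗ h) (v i) = (conj (c i) * ε i * c i) • v i := by
  simp only [LinearMap.comp_apply, hh, map_smul, hη,
    LinearMap.adjoint_apply_of_apply_eq_smul hw hh, smul_smul]
  ring_nf

end Adjoint

theorem Real.sqrt_abs_mul_sign_mul_sqrt_abs {x : ℝ} (hx : x ≠ 0) :
    √|x| * (if 0 < x then 1 else -1) * √|x| = x := by
  rw [mul_right_comm, Real.mul_self_sqrt (abs_nonneg x)]
  split_ifs with hpos
  · rw [abs_of_pos hpos, mul_one]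
  · rw [abs_of_neg (lt_of_le_of_ne (not_lt.mp hpos) hx), mul_neg_one, neg_neg]

theorem stmt_11_general {V : Type*} [NormedAddCommGroup V] [InnerProductSpace ℝ V]
    [FiniteDimensional ℝ V] {n : ℕ} (g : V →ₗ[ℝ] V)
    (hinv : Function.Bijective g)
    -- an orthonormal eigenbasis of `g` with eigenvalues `μ` (spectral theorem):
    (v : OrthonormalBasis (Fin n) ℝ V) (μ : Fin n → ℝ)
    (heig : ∀ i, g (v i) = μ i • v i)
    (p : ℕ)
    (hp : p = (Finset.univ.filter fun i : Fin n => 0 < μ i).card)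
    (b : OrthonormalBasis (Fin n) ℝ V) (η : V →ₗ[ℝ] V)
    (hη : ∀ k : Fin n, η (b k) = if (k : ℕ) < p then b k else -b k) :
    ∃ h : V →ₗ[ℝ] V, Function.Bijective h ∧
      g = LinearMap.adjoint h ∘ₗ η ∘ₗ h := by
  have hμ : ∀ i, μ i ≠ 0 := fun i hi =>
    v.orthonormal.ne_zero i (hinv.1 (by rw [heig, hi, zero_smul, map_zero]))
  have hpn : p ≤ n := hp ▸ Finset.card_le_univ _ |>.trans_eq (Fintype.card_fin n)
  obtain ⟨σ, hσ⟩ := Equiv.Perm.exists_apply_iff_of_card_filter_eq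
    (p := fun i : Fin n => 0 < μ i) (q := fun k : Fin n => (k : ℕ) < p)
    (by rw [Fin.card_filter_val_lt, min_eq_right hpn, hp])
  let h : V →ₗ[ℝ] V := v.toBasis.constr ℝ fun i => √|μ i| • b (σ i)
  have hh : ∀ i, h (v i) = √|μ i| • b (σ i) := fun i => by
    rw [← v.coe_toBasis]
    exact v.toBasis.constr_basis ℝ _ i
  have hησ : ∀ i, η (b (σ i)) = (if 0 < μ i then 1 else -1 : ℝ) • b (σ i) := fun i => by
    simp only [hη, hσ]
    split_ifs <;> simp
  have hfac : LinearMap.adjoint h ∘ₗ η ∘ₗ h = g := v.toBasis.ext fun i => by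
    rw [OrthonormalBasis.coe_toBasis, heig,
      LinearMap.adjoint_comp_comp_apply_of_apply_eq_smul (b.orthonormal.comp σ σ.injective) hh hησ,
      starRingEnd_apply, star_trivial, Real.sqrt_abs_mul_sign_mul_sqrt_abs (hμ i)]
  have hinj : Function.Injective h := by
    rw [← hfac] at hinv
    simp only [LinearMap.coe_comp] at hinv
    exact hinv.1.of_comp.of_comp
  exact ⟨h, ⟨hinj, LinearMap.injective_iff_surjective.mp hinj⟩, hfac.symm⟩

theorem stmt_11 {V : Type*} [NormedAddCommGroup V] [InnerProductSpace ℝ V]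
    [FiniteDimensional ℝ V] {n : ℕ} (g : V →ₗ[ℝ] V)
    (hsym : ∀ v w : V, ⟪g v, w⟫ = ⟪v, g w⟫) (hinv : Function.Bijective g)
    -- an orthonormal eigenbasis of `g` with eigenvalues `μ` (spectral theorem):
    (v : OrthonormalBasis (Fin n) ℝ V) (μ : Fin n → ℝ)
    (heig : ∀ i, g (v i) = μ i • v i)
    (p q : ℕ)
    (hpq : p + q = n)
    (hp : p = (Finset.univ.filter fun i : Fin n => 0 < μ i).card)
    (hq : q = (Finset.univ.filter fun i : Fin n => μ i < 0).card)
    (b : OrthonormalBasis (Fin n) ℝ V) (η : V →ₗ[ℝ] V)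
    (hη : ∀ k : Fin n, η (b k) = if (k : ℕ) < p then b k else -b k) :
    ∃ h : V →ₗ[ℝ] V, Function.Bijective h ∧
      g = LinearMap.adjoint h ∘ₗ η ∘ₗ h :=
  stmt_11_general g hinv v μ heig p hp b η hη
end

section
/- Let g be a self-adjoint invertible endomorphism of an n-dimensional real inner product space with orthonormal eigenbasis (v_j) and eigenvalues (λ_j), ordered so that λ_j > 0 for j ≤ p and λ_j < 0 for j > p. Define h(a) = Σ_j √|λ_j| ⟨a, v_j⟩ b_j where (b_j) is an orthonormal basis, and let η be as above (η(b_k) = ±b_k according to k ≤ p or k > p). Then hᵀ ∘ η ∘ h = g and h is invertible. -/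
open scoped RealInnerProductSpace

theorem stmt_12 {V : Type*} [NormedAddCommGroup V] [InnerProductSpace ℝ V]
    [FiniteDimensional ℝ V] {n : ℕ} (g : V →ₗ[ℝ] V)
    (hsym : ∀ v w : V, ⟪g v, w⟫ = ⟪v, g w⟫) (hinv : Function.Bijective g)
    -- an ordered orthonormal eigenbasis of `g`:
    (v : OrthonormalBasis (Fin n) ℝ V) (μ : Fin n → ℝ)
    (heig : ∀ i, g (v i) = μ i • v i)
    (p : ℕ)
    (hord : ∀ i : Fin n, ((i : ℕ) < p → 0 < μ i) ∧ (p ≤ (i : ℕ) → μ i < 0))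
    (b : OrthonormalBasis (Fin n) ℝ V)
    (η : V →ₗ[ℝ] V)
    (hη : ∀ k : Fin n, η (b k) = if (k : ℕ) < p then b k else -b k)
    (h : V →ₗ[ℝ] V)
    (hh : ∀ a : V, h a = ∑ j : Fin n, (Real.sqrt |μ j| * ⟪a, v j⟫) • b j) :
    LinearMap.adjoint h ∘ₗ η ∘ₗ h = g ∧ Function.Bijective h := by
  have hb : ∀ i j : Fin n, ⟪b i, b j⟫ = if i = j then (1:ℝ) else 0 :=
    orthonormal_iff_ite.mp b.orthonormal
  have hμne : ∀ j : Fin n, μ j ≠ 0 := by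
    intro j
    rcases lt_or_ge (j : ℕ) p with hj | hj
    · exact ne_of_gt ((hord j).1 hj)
    · exact ne_of_lt ((hord j).2 hj)
  have hsq : ∀ j : Fin n,
      (if (j : ℕ) < p then (1:ℝ) else -1) * (Real.sqrt |μ j| * Real.sqrt |μ j|) = μ j := by
    intro j
    rw [Real.mul_self_sqrt (abs_nonneg _)]
    rcases lt_or_ge (j : ℕ) p with hj | hj
    · rw [if_pos hj, abs_of_pos ((hord j).1 hj)]; ring
    · rw [if_neg (not_lt.mpr hj), abs_of_neg ((hord j).2 hj)]; ring
  constructor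
  · apply LinearMap.ext
    intro a
    apply ext_inner_right ℝ
    intro w
    rw [LinearMap.comp_apply, LinearMap.comp_apply, LinearMap.adjoint_inner_left]
    have hga : ⟪g a, w⟫ = ∑ j : Fin n, μ j * (⟪a, v j⟫ * ⟪v j, w⟫) := by
      conv_lhs => rw [← v.sum_repr' a]
      rw [map_sum, sum_inner]
      congr 1
      ext j
      rw [map_smul, heig j, inner_smul_left, inner_smul_left]
      simp [real_inner_comm (v j) a]
      ring
    rw [hga, hh a, hh w, map_sum]
    simp only [map_smul, hη]
    rw [sum_inner]
    congr 1
    ext j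
    rw [inner_smul_left, inner_sum]
    simp only [inner_smul_right]
    have : ∀ k : Fin n,
        Real.sqrt |μ k| * ⟪w, v k⟫ * ⟪(if (j : ℕ) < p then b j else -b j), b k⟫
        = (if j = k then (if (j : ℕ) < p then (1:ℝ) else -1) * (Real.sqrt |μ k| * ⟪w, v k⟫) else 0) := by
      intro k
      by_cases hjk : j = k
      · subst hjk
        by_cases hjp : (j : ℕ) < p
        · rw [if_pos hjp, hb j j]; simp [hjp]
        · rw [if_neg hjp, inner_neg_left, hb j j]; simp [hjp]
      · by_cases hjp : (j : ℕ) < p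
        · rw [if_pos hjp, hb j k]; simp [hjk]
        · rw [if_neg hjp, inner_neg_left, hb j k]; simp [hjk]
    rw [Finset.sum_congr rfl (fun k _ => this k), Finset.sum_ite_eq (Finset.univ) j]
    simp only [Finset.mem_univ, if_pos]
    rw [real_inner_comm w (v j)]
    conv_rhs => rw [← hsq j]
    simp only [RCLike.star_def, starRingEnd_apply, star_trivial]
    ring
  · have hinj : Function.Injective h := by
      rw [← LinearMap.ker_eq_bot, LinearMap.ker_eq_bot']
      intro a ha
      have hcoef : ∀ k : Fin n, ⟪a, v k⟫ = 0 := by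
        intro k
        have h0 : ⟪h a, b k⟫ = 0 := by rw [ha, inner_zero_left]
        rw [hh a, sum_inner] at h0
        simp only [inner_smul_left, hb, RCLike.star_def, starRingEnd_apply, star_trivial,
          mul_ite, mul_one, mul_zero, Finset.sum_ite_eq, Finset.sum_ite_eq', Finset.mem_univ, if_pos] at h0
        have hs : Real.sqrt |μ k| ≠ 0 := by
          simp [Real.sqrt_eq_zero', abs_nonneg, abs_eq_zero, hμne k,
            not_lt.mpr (abs_nonneg (μ k))]
        exact (mul_eq_zero.mp h0).resolve_left hs
      have := v.sum_repr' a
      rw [← this]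
      apply Finset.sum_eq_zero
      intro j _
      rw [real_inner_comm, hcoef j, zero_smul]
    exact ⟨hinj, LinearMap.injective_iff_surjective.mp hinj⟩
end
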